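/- (One-sided Lyapunov inequality underlying Theorem 4.7(2)) Let d = 1, let Q^{(m+1)} be a conservative Q-matrix on S, and suppose Q(x) = Q^{(m+1)} for all x ≥ α_m, where α_m ∈ ℝ. Suppose ρ, h : ℝ → (0,∞) are twice continuously differentiable, there exist r0 > 0 and β ∈ ℝ^N with ℒ^{(i)}ρ(x) ≤ β_i h(x) for all |x| > r0 and i ∈ S, and ℒ^{(i)}h(x)/h(x) → 0 as x → +∞ for every i ∈ S. Suppose there exist c > 0 and ξ ∈ ℝ^N with ξ_i > 0 for all i such that (Q^{(m+1)}ξ)_i = −c − β_i for every i. Then there exists r1 > max(r0, α_m) such that the function V(x,i) = ρ(x) + ξ_i h(x) satisfies 𝒜V(x,i) ≤ −(c/2) h(x) < 0 for all x > r1 and all i ∈ S. -/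

import Mathlib

open scoped BigOperators
open Filter

/-- The one-dimensional diffusion generator
`ℒ^{(i)}f(x) = b(x,i) f'(x) + (1/2) a(x,i) f''(x)` in a fixed environment. -/
noncomputable def diffGen1 (b a : ℝ → ℝ) (f : ℝ → ℝ) (x : ℝ) : ℝ :=
  b x * deriv f x + (1 / 2) * a x * deriv (deriv f) x

/-- The full generator of the one-dimensional regime-switching diffusion:
`𝒜V(x,i) = ℒ^{(i)}V(·,i)(x) + Σ_{j≠i} q_{ij}(x)(V(x,j) − V(x,i))`. -/
noncomputable def hybridGen1 {N : ℕ}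
    (b a : ℝ → Fin N → ℝ)
    (Q : ℝ → Matrix (Fin N) (Fin N) ℝ)
    (V : ℝ → Fin N → ℝ) (x : ℝ) (i : Fin N) : ℝ :=
  diffGen1 (fun z => b z i) (fun z => a z i) (fun z => V z i) x +
    ∑ j ∈ Finset.univ.erase i, Q x i j * (V x j - V x i)

/-
Right of `α_m` the switching matrix is `Q^{(m+1)}`; linearity of `ℒ^{(i)}` and the zero row sums
of `Q(x)` give `𝒜V(x,i) = ℒ^{(i)}ρ(x) + ξ_i ℒ^{(i)}h(x) + (Q^{(m+1)}ξ)_i h(x) ≤ ξ_i ℒ^{(i)}h(x) − c h(x)`.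
As `ℒ^{(i)}h = o(h)` at `+∞`, the term `ξ_i ℒ^{(i)}h(x)` is eventually at most `(c/2) h(x)`.
-/

theorem deriv_add_const_mul {f g : ℝ → ℝ} (hf : Differentiable ℝ f) (hg : Differentiable ℝ g)
    (k : ℝ) : deriv (fun z => f z + k * g z) = fun z => deriv f z + k * deriv g z := by
  funext z
  rw [deriv_fun_add (hf z) ((hg z).const_mul k), deriv_const_mul k (hg z)]

theorem diffGen1_add_const_mul (b a : ℝ → ℝ) {f g : ℝ → ℝ} (hf : ContDiff ℝ 2 f)
    (hg : ContDiff ℝ 2 g) (k x : ℝ) :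
    diffGen1 b a (fun z => f z + k * g z) x = diffGen1 b a f x + k * diffGen1 b a g x := by
  have hf' := hf.differentiable two_ne_zero
  have hg' := hg.differentiable two_ne_zero
  simp only [diffGen1, deriv_add_const_mul hf' hg',
    deriv_add_const_mul hf.differentiable_deriv_two hg.differentiable_deriv_two]
  ring

theorem Matrix.sum_erase_mul_sub_eq_mulVec {ι R : Type*} [Fintype ι] [DecidableEq ι] [Ring R]
    (A : Matrix ι ι R) (v : ι → R) (i : ι) (hrow : ∑ j, A i j = 0) :
    ∑ j ∈ Finset.univ.erase i, A i j * (v j - v i) = A.mulVec v i := by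
  rw [Finset.sum_erase _ (by simp), Matrix.mulVec, dotProduct]
  simp only [mul_sub, Finset.sum_sub_distrib, ← Finset.sum_mul, hrow, zero_mul, sub_zero]

theorem hybridGen1_add_const_mul {N : ℕ} (b a : ℝ → Fin N → ℝ)
    (Q : ℝ → Matrix (Fin N) (Fin N) ℝ) {ρ h : ℝ → ℝ} (hρ : ContDiff ℝ 2 ρ) (hh : ContDiff ℝ 2 h)
    (ξ : Fin N → ℝ) (x : ℝ) (i : Fin N) (hrow : ∑ j, Q x i j = 0) :
    hybridGen1 b a Q (fun z j => ρ z + ξ j * h z) x i =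
      diffGen1 (fun z => b z i) (fun z => a z i) ρ x
        + ξ i * diffGen1 (fun z => b z i) (fun z => a z i) h x + (Q x).mulVec ξ i * h x := by
  have hswitch : ∑ j ∈ Finset.univ.erase i, Q x i j * ((ρ x + ξ j * h x) - (ρ x + ξ i * h x)) =
      (∑ j ∈ Finset.univ.erase i, Q x i j * (ξ j - ξ i)) * h x := by
    rw [Finset.sum_mul]
    exact Finset.sum_congr rfl fun j _ => by ring
  rw [hybridGen1, diffGen1_add_const_mul _ _ hρ hh, hswitch,
    Matrix.sum_erase_mul_sub_eq_mulVec _ _ _ hrow]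

theorem eventually_lt_mul_of_tendsto_div_zero {α : Type*} {l : Filter α} {f g : α → ℝ}
    (hfg : Tendsto (fun x => f x / g x) l (nhds 0)) (hg : ∀ x, 0 < g x) {ε : ℝ} (hε : 0 < ε) :
    ∀ᶠ x in l, f x < ε * g x :=
  (hfg.eventually_lt_const hε).mono fun x hx => (div_lt_iff₀ (hg x)).1 hx

theorem lyapunov_one_sided_transience_general
    (N : ℕ)
    (b a : ℝ → Fin N → ℝ)
    (Q : ℝ → Matrix (Fin N) (Fin N) ℝ)
    (hQrow : ∀ x i, ∑ j, Q x i j = 0)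
    (Qm : Matrix (Fin N) (Fin N) ℝ)
    (αm : ℝ)
    (hQeqm : ∀ x : ℝ, αm ≤ x → Q x = Qm)
    (ρ h : ℝ → ℝ)
    (hhpos : ∀ x, 0 < h x)
    (hρC2 : ContDiff ℝ 2 ρ) (hhC2 : ContDiff ℝ 2 h)
    (r0 : ℝ)
    (β : Fin N → ℝ)
    (hL : ∀ x : ℝ, r0 < |x| → ∀ i,
      diffGen1 (fun z => b z i) (fun z => a z i) ρ x ≤ β i * h x)
    (hLh : ∀ i, Tendsto (fun x => diffGen1 (fun z => b z i) (fun z => a z i) h x / h x)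
      Filter.atTop (nhds 0))
    (c : ℝ) (hc : 0 < c)
    (ξ : Fin N → ℝ) (hξ : ∀ i, 0 < ξ i)
    (hfred : ∀ i, Qm.mulVec ξ i = -c - β i) :
    ∃ r1 : ℝ, max r0 αm < r1 ∧
      ∀ x : ℝ, r1 < x → ∀ i,
        hybridGen1 b a Q (fun z j => ρ z + ξ j * h z) x i ≤ -(c / 2) * h x ∧
        -(c / 2) * h x < 0 := by
  have hLh_small : ∀ᶠ x in atTop, ∀ i,
      ξ i * diffGen1 (fun z => b z i) (fun z => a z i) h x ≤ c / 2 * h x := by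
    refine eventually_all.2 fun i => ?_
    have hε : 0 < c / (2 * ξ i) := by have := hξ i; positivity
    filter_upwards [eventually_lt_mul_of_tendsto_div_zero (hLh i) hhpos hε] with x hx
    calc ξ i * diffGen1 (fun z => b z i) (fun z => a z i) h x
        ≤ ξ i * (c / (2 * ξ i) * h x) := mul_le_mul_of_nonneg_left hx.le (hξ i).le
      _ = c / 2 * h x := by field_simp [(hξ i).ne']
  have hfinal : ∀ᶠ x in atTop, ∀ i,
      hybridGen1 b a Q (fun z j => ρ z + ξ j * h z) x i ≤ -(c / 2) * h x ∧
        -(c / 2) * h x < 0 := by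
    filter_upwards [eventually_gt_atTop r0, eventually_ge_atTop αm, hLh_small]
      with x hxr0 hxαm hsmall i
    have hρ := hL x (hxr0.trans_le (le_abs_self x)) i
    have hhx := hhpos x
    rw [hybridGen1_add_const_mul b a Q hρC2 hhC2 ξ x i (hQrow x i), hQeqm x hxαm, hfred i]
    exact ⟨by linarith [hsmall i], by nlinarith⟩
  obtain ⟨r1, hr1, hbound⟩ := (atTop_basis_Ioi' (max r0 αm)).eventually_iff.1 hfinal
  exact ⟨r1, hr1, fun x hx => hbound hx⟩

/-- (One-sided Lyapunov inequality underlying Theorem 4.7(2)): with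
`Q(x) = Q^{(m+1)}` for `x ≥ α_m`, `ℒ^{(i)}ρ ≤ β_i h` for `|x| > r0`,
`ℒ^{(i)}h/h → 0` as `x → +∞`, and `(Q^{(m+1)}ξ)_i = −c − β_i` with `ξ ≫ 0`,
`c > 0`, there exists `r1 > max(r0, α_m)` such that `V(x,i) = ρ(x) + ξ_i h(x)`
satisfies `𝒜V(x,i) ≤ −(c/2) h(x) < 0` for all `x > r1` and all `i`. -/
theorem lyapunov_one_sided_transience
    (N : ℕ) (hN : 1 ≤ N)
    (b a : ℝ → Fin N → ℝ)
    (ha : ∀ x i, 0 ≤ a x i)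
    (Q : ℝ → Matrix (Fin N) (Fin N) ℝ)
    (hQoff : ∀ x i j, i ≠ j → 0 ≤ Q x i j)
    (hQrow : ∀ x i, ∑ j, Q x i j = 0)
    (Qm : Matrix (Fin N) (Fin N) ℝ)
    (hQmoff : ∀ i j, i ≠ j → 0 ≤ Qm i j) (hQmrow : ∀ i, ∑ j, Qm i j = 0)
    (αm : ℝ)
    (hQeqm : ∀ x : ℝ, αm ≤ x → Q x = Qm)
    (ρ h : ℝ → ℝ)
    (hρpos : ∀ x, 0 < ρ x) (hhpos : ∀ x, 0 < h x)
    (hρC2 : ContDiff ℝ 2 ρ) (hhC2 : ContDiff ℝ 2 h)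
    (r0 : ℝ) (hr0 : 0 < r0)
    (β : Fin N → ℝ)
    (hL : ∀ x : ℝ, r0 < |x| → ∀ i,
      diffGen1 (fun z => b z i) (fun z => a z i) ρ x ≤ β i * h x)
    (hLh : ∀ i, Tendsto (fun x => diffGen1 (fun z => b z i) (fun z => a z i) h x / h x)
      Filter.atTop (nhds 0))
    (c : ℝ) (hc : 0 < c)
    (ξ : Fin N → ℝ) (hξ : ∀ i, 0 < ξ i)
    (hfred : ∀ i, Qm.mulVec ξ i = -c - β i) :
    ∃ r1 : ℝ, max r0 αm < r1 ∧
      ∀ x : ℝ, r1 < x → ∀ i,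
        hybridGen1 b a Q (fun z j => ρ z + ξ j * h z) x i ≤ -(c / 2) * h x ∧
        -(c / 2) * h x < 0 :=
  lyapunov_one_sided_transience_general N b a Q hQrow Qm αm hQeqm ρ h hhpos hρC2 hhC2 r0 β hL hLh c
    hc ξ hξ hfred
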